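/- arXiv:2407.18313 — 3 statements merged into one kernel-verified Lean document; each statement's English description precedes it below -/
import Mathlib

section
/- (The quadratic function ξ majorizes ω.) Let Y be a configuration with η₂²(Y) > 0 and d_ij(Y) > 0 for every pair i < j with w_ij > 0. Define ω(X,Y) := σ_R(X) − σ₂(Y)·η₂²(X) and ξ(X,Y) := η²(Δ) + (1 − σ₂(Y))·η₁²(X) − 2·Σ_{i<j} w_ij δ_ij ⟨X i − X j, Y i − Y j⟩/d_ij(Y) + σ₂(Y)·d̄(Y)·Σ_{i<j} w_ij d_ij(X)²/d_ij(Y). Then for every configuration X, ω(X,Y) ≤ ξ(X,Y), and ω(Y,Y) = ξ(Y,Y). -/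
open scoped BigOperators

/-- Distance between points `i` and `j` of a configuration. -/
noncomputable def confDist {n p : ℕ} (X : Fin n → EuclideanSpace ℝ (Fin p))
    (i j : Fin n) : ℝ := ‖X i - X j‖

/-- Sum of `f i j` over all pairs `i < j`. -/
noncomputable def pairSum (n : ℕ) (f : Fin n → Fin n → ℝ) : ℝ :=
  ∑ i : Fin n, ∑ j : Fin n, if i < j then f i j else 0

/-- Raw stress. -/
noncomputable def sigmaR {n p : ℕ} (w δ : Fin n → Fin n → ℝ)
    (X : Fin n → EuclideanSpace ℝ (Fin p)) : ℝ :=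
  pairSum n (fun i j => w i j * (δ i j - confDist X i j) ^ 2)

/-- `η₁²`. -/
noncomputable def eta1sq {n p : ℕ} (w : Fin n → Fin n → ℝ)
    (X : Fin n → EuclideanSpace ℝ (Fin p)) : ℝ :=
  pairSum n (fun i j => w i j * confDist X i j ^ 2)

/-- Mean of the distances. -/
noncomputable def dbar {n p : ℕ} (w : Fin n → Fin n → ℝ)
    (X : Fin n → EuclideanSpace ℝ (Fin p)) : ℝ :=
  pairSum n (fun i j => w i j * confDist X i j)

/-- Variance of the distances, `η₂²`. -/
noncomputable def eta2sq {n p : ℕ} (w : Fin n → Fin n → ℝ)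
    (X : Fin n → EuclideanSpace ℝ (Fin p)) : ℝ :=
  pairSum n (fun i j => w i j * (confDist X i j - dbar w X) ^ 2)

/-- `η²(Δ)`. -/
noncomputable def etaDeltaSq (n : ℕ) (w δ : Fin n → Fin n → ℝ) : ℝ :=
  pairSum n (fun i j => w i j * δ i j ^ 2)

/-- Kruskal's stress formula two. -/
noncomputable def sigma2 {n p : ℕ} (w δ : Fin n → Fin n → ℝ)
    (X : Fin n → EuclideanSpace ℝ (Fin p)) : ℝ :=
  sigmaR w δ X / eta2sq w X

/-- The Dinkelbach difference `ω(X,Y)`. -/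
noncomputable def omegaFun {n p : ℕ} (w δ : Fin n → Fin n → ℝ)
    (X Y : Fin n → EuclideanSpace ℝ (Fin p)) : ℝ :=
  sigmaR w δ X - sigma2 w δ Y * eta2sq w X

/-- The quadratic majorizer `ξ(X,Y)`. -/
noncomputable def xiFun {n p : ℕ} (w δ : Fin n → Fin n → ℝ)
    (X Y : Fin n → EuclideanSpace ℝ (Fin p)) : ℝ :=
  etaDeltaSq n w δ + (1 - sigma2 w δ Y) * eta1sq w X -
    2 * pairSum n (fun i j =>
      w i j * δ i j * (inner ℝ (X i - X j) (Y i - Y j) : ℝ) / confDist Y i j) +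
    sigma2 w δ Y * dbar w Y *
      pairSum n (fun i j => w i j * confDist X i j ^ 2 / confDist Y i j)

/-!
Write `ρ(X) = Σ w δ d(X)` and `S = σ₂(Y)`. Expanding the squares (with `Σ w = 1`) gives
`ω(X,Y) = η²(Δ) + (1 - S) η₁²(X) - 2ρ(X) + S d̄(X)²`, and `ξ(X,Y)` is this expression with two
terms replaced by Cauchy–Schwarz bounds: `⟨X i - X j, Y i - Y j⟩ / d_ij(Y) ≤ d_ij(X)` bounds
`-2ρ(X)` from above, and the weighted Cauchy–Schwarz inequality
`d̄(X)² ≤ d̄(Y) · Σ w d(X)² / d(Y)` bounds `S d̄(X)²`, as `S ≥ 0`. At `X = Y` both bounds are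
equalities.
-/

open Finset

section PairSum

variable {n : ℕ}

theorem pairSum_eq_sum_filter (f : Fin n → Fin n → ℝ) :
    pairSum n f = ∑ q ∈ univ.filter (fun q : Fin n × Fin n => q.1 < q.2), f q.1 q.2 := by
  rw [sum_filter, pairSum, Fintype.sum_prod_type]

theorem pairSum_congr {f g : Fin n → Fin n → ℝ} (h : ∀ i j, i < j → f i j = g i j) :
    pairSum n f = pairSum n g := by
  simp only [pairSum_eq_sum_filter]
  exact sum_congr rfl fun q hq => h _ _ (mem_filter.1 hq).2

theorem pairSum_le_pairSum {f g : Fin n → Fin n → ℝ} (h : ∀ i j, i < j → f i j ≤ g i j) :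
    pairSum n f ≤ pairSum n g := by
  simp only [pairSum_eq_sum_filter]
  exact sum_le_sum fun q hq => h _ _ (mem_filter.1 hq).2

theorem pairSum_nonneg {f : Fin n → Fin n → ℝ} (h : ∀ i j, i < j → 0 ≤ f i j) :
    0 ≤ pairSum n f := by
  rw [pairSum_eq_sum_filter]
  exact sum_nonneg fun q hq => h _ _ (mem_filter.1 hq).2

theorem pairSum_add (f g : Fin n → Fin n → ℝ) :
    pairSum n (fun i j => f i j + g i j) = pairSum n f + pairSum n g := by
  simp only [pairSum_eq_sum_filter, sum_add_distrib]

theorem pairSum_mul_left (c : ℝ) (f : Fin n → Fin n → ℝ) :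
    pairSum n (fun i j => c * f i j) = c * pairSum n f := by
  simp only [pairSum_eq_sum_filter, mul_sum]

theorem pairSum_sq_le_mul_of_sq_le_mul {r f g : Fin n → Fin n → ℝ}
    (hf : ∀ i j, i < j → 0 ≤ f i j) (hg : ∀ i j, i < j → 0 ≤ g i j)
    (hr : ∀ i j, i < j → r i j ^ 2 ≤ f i j * g i j) :
    pairSum n r ^ 2 ≤ pairSum n f * pairSum n g := by
  simp only [pairSum_eq_sum_filter]
  exact sum_sq_le_sum_mul_sum_of_sq_le_mul _ (fun q hq => hf _ _ (mem_filter.1 hq).2)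
    (fun q hq => hg _ _ (mem_filter.1 hq).2) (fun q hq => hr _ _ (mem_filter.1 hq).2)

end PairSum

theorem real_inner_div_norm_le_norm {E : Type*} [NormedAddCommGroup E] [InnerProductSpace ℝ E]
    (x y : E) : inner ℝ x y / ‖y‖ ≤ ‖x‖ := by
  rcases (norm_nonneg y).eq_or_lt with hy | hy
  · rw [← hy, div_zero]
    exact norm_nonneg x
  · exact (div_le_iff₀ hy).2 (real_inner_le_norm x y)

section Stress

variable {n p : ℕ} (w δ : Fin n → Fin n → ℝ)

noncomputable def rho (X : Fin n → EuclideanSpace ℝ (Fin p)) : ℝ :=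
  pairSum n (fun i j => w i j * δ i j * confDist X i j)

theorem sigmaR_eq (X : Fin n → EuclideanSpace ℝ (Fin p)) :
    sigmaR w δ X = etaDeltaSq n w δ - 2 * rho w δ X + eta1sq w X := by
  rw [sigmaR, etaDeltaSq, eta1sq, rho, sub_eq_add_neg, ← neg_mul, ← pairSum_mul_left,
    ← pairSum_add, ← pairSum_add]
  exact pairSum_congr fun i j _ => by ring

theorem eta2sq_eq (hw1 : pairSum n w = 1) (X : Fin n → EuclideanSpace ℝ (Fin p)) :
    eta2sq w X = eta1sq w X - dbar w X ^ 2 := by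
  have h : eta2sq w X = pairSum n (fun i j => w i j * confDist X i j ^ 2 +
      ((-2 * dbar w X) * (w i j * confDist X i j) + dbar w X ^ 2 * w i j)) :=
    pairSum_congr fun i j _ => by ring
  rw [h, pairSum_add, pairSum_add, pairSum_mul_left, pairSum_mul_left, hw1, ← eta1sq, ← dbar]
  ring

theorem omegaFun_eq (hw1 : pairSum n w = 1) (X Y : Fin n → EuclideanSpace ℝ (Fin p)) :
    omegaFun w δ X Y = etaDeltaSq n w δ + (1 - sigma2 w δ Y) * eta1sq w X - 2 * rho w δ X +
      sigma2 w δ Y * dbar w X ^ 2 := by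
  rw [omegaFun, sigmaR_eq, eta2sq_eq w hw1]
  ring

theorem xiFun_self (Y : Fin n → EuclideanSpace ℝ (Fin p)) :
    xiFun w δ Y Y = etaDeltaSq n w δ + (1 - sigma2 w δ Y) * eta1sq w Y - 2 * rho w δ Y +
      sigma2 w δ Y * dbar w Y ^ 2 := by
  have hρ : pairSum n (fun i j =>
      w i j * δ i j * (inner ℝ (Y i - Y j) (Y i - Y j) : ℝ) / confDist Y i j) = rho w δ Y :=
    pairSum_congr fun i j _ => by
      rw [real_inner_self_eq_norm_sq, mul_div_assoc, ← confDist, sq, mul_self_div_self]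
  have hd : pairSum n (fun i j => w i j * confDist Y i j ^ 2 / confDist Y i j) = dbar w Y :=
    pairSum_congr fun i j _ => by rw [mul_div_assoc, sq, mul_self_div_self]
  rw [xiFun, hρ, hd]
  ring

variable {w}

theorem sigma2_nonneg (hw : ∀ i j : Fin n, i < j → 0 ≤ w i j)
    (Y : Fin n → EuclideanSpace ℝ (Fin p)) : 0 ≤ sigma2 w δ Y :=
  div_nonneg (pairSum_nonneg fun i j hij => mul_nonneg (hw i j hij) (sq_nonneg _))
    (pairSum_nonneg fun i j hij => mul_nonneg (hw i j hij) (sq_nonneg _))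

variable {δ}

theorem pairSum_inner_div_le_rho (hw : ∀ i j : Fin n, i < j → 0 ≤ w i j)
    (hδ : ∀ i j : Fin n, i < j → 0 ≤ δ i j) (X Y : Fin n → EuclideanSpace ℝ (Fin p)) :
    pairSum n (fun i j =>
      w i j * δ i j * (inner ℝ (X i - X j) (Y i - Y j) : ℝ) / confDist Y i j) ≤ rho w δ X :=
  pairSum_le_pairSum fun i j hij => by
    rw [mul_div_assoc]
    exact mul_le_mul_of_nonneg_left (real_inner_div_norm_le_norm _ _)
      (mul_nonneg (hw i j hij) (hδ i j hij))

theorem dbar_sq_le (hw : ∀ i j : Fin n, i < j → 0 ≤ w i j)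
    {Y : Fin n → EuclideanSpace ℝ (Fin p)}
    (hYd : ∀ i j : Fin n, i < j → 0 < w i j → 0 < confDist Y i j)
    (X : Fin n → EuclideanSpace ℝ (Fin p)) :
    dbar w X ^ 2 ≤
      dbar w Y * pairSum n (fun i j => w i j * confDist X i j ^ 2 / confDist Y i j) := by
  exact pairSum_sq_le_mul_of_sq_le_mul
    (fun i j hij => mul_nonneg (hw i j hij) (norm_nonneg _))
    (fun i j hij => div_nonneg (mul_nonneg (hw i j hij) (sq_nonneg _)) (norm_nonneg _))
    fun i j hij => le_of_eq <| (hw i j hij).eq_or_lt.elim (fun h => by simp [← h]) fun h => by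
      field_simp [(hYd i j hij h).ne']

end Stress

theorem xi_majorizes_omega_general
    {n p : ℕ}
    (w δ : Fin n → Fin n → ℝ)
    (hw : ∀ i j : Fin n, i < j → 0 ≤ w i j)
    (hw1 : pairSum n w = 1)
    (hδ : ∀ i j : Fin n, i < j → 0 ≤ δ i j)
    (Y : Fin n → EuclideanSpace ℝ (Fin p))
    (hYd : ∀ i j : Fin n, i < j → 0 < w i j → 0 < confDist Y i j) :
    (∀ X : Fin n → EuclideanSpace ℝ (Fin p), omegaFun w δ X Y ≤ xiFun w δ X Y) ∧
      omegaFun w δ Y Y = xiFun w δ Y Y := by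
  refine ⟨fun X => ?_, by rw [omegaFun_eq w δ hw1, xiFun_self]⟩
  have hρ := pairSum_inner_div_le_rho hw hδ X Y
  have hd := mul_le_mul_of_nonneg_left (dbar_sq_le hw hYd X) (sigma2_nonneg δ hw Y)
  rw [omegaFun_eq w δ hw1, xiFun]
  linarith

/-- The quadratic function `ξ` majorizes `ω`, and touches it at `X = Y`. -/
theorem xi_majorizes_omega
    {n p : ℕ} (hn : 2 ≤ n) (hp : 1 ≤ p)
    (w δ : Fin n → Fin n → ℝ)
    (hw : ∀ i j : Fin n, i < j → 0 ≤ w i j)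
    (hw1 : pairSum n w = 1)
    (hδ : ∀ i j : Fin n, i < j → 0 ≤ δ i j)
    (Y : Fin n → EuclideanSpace ℝ (Fin p))
    (hY2 : 0 < eta2sq w Y)
    (hYd : ∀ i j : Fin n, i < j → 0 < w i j → 0 < confDist Y i j) :
    (∀ X : Fin n → EuclideanSpace ℝ (Fin p), omegaFun w δ X Y ≤ xiFun w δ X Y) ∧
      omegaFun w δ Y Y = xiFun w δ Y Y :=
  xi_majorizes_omega_general w δ hw hw1 hδ Y hYd
end

section
/- (Gradient of the variance of the distances.) Let X be an n×p real matrix with d_ij(X) > 0 for every pair i < j with w_ij > 0. Then the function η₂² is Fréchet differentiable at X with derivative the linear map H ↦ 2·trace(Hᵀ (V − M(X)) X). -/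
open scoped BigOperators
open Matrix

/-- Euclidean distance between rows `i` and `j` of an `n × p` matrix. -/
noncomputable def rowDist {n p : ℕ} (X : Matrix (Fin n) (Fin p) ℝ) (i j : Fin n) : ℝ :=
  Real.sqrt (∑ k : Fin p, (X i k - X j k) ^ 2)

/-- The matrix `A_ij = (e_i - e_j)(e_i - e_j)ᵀ`. -/
noncomputable def Amat {n : ℕ} (i j : Fin n) : Matrix (Fin n) (Fin n) ℝ :=
  Matrix.vecMulVec (Pi.single i 1 - Pi.single j 1) (Pi.single i 1 - Pi.single j 1)

/-- The matrix `V = Σ_{i<j} w_ij A_ij`. -/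
noncomputable def Vmat {n : ℕ} (w : Fin n → Fin n → ℝ) : Matrix (Fin n) (Fin n) ℝ :=
  ∑ i : Fin n, ∑ j : Fin n, if i < j then w i j • Amat i j else 0

/-- Mean distance `d̄(X) = Σ_{i<j} w_ij d_ij(X)`. -/
noncomputable def dbarM {n p : ℕ} (w : Fin n → Fin n → ℝ)
    (X : Matrix (Fin n) (Fin p) ℝ) : ℝ :=
  ∑ i : Fin n, ∑ j : Fin n, if i < j then w i j * rowDist X i j else 0

/-- The matrix `M(X) = d̄(X) · Σ_{i<j, d_ij(X)>0} (w_ij/d_ij(X)) A_ij`. -/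
noncomputable def Mmat {n p : ℕ} (w : Fin n → Fin n → ℝ)
    (X : Matrix (Fin n) (Fin p) ℝ) : Matrix (Fin n) (Fin n) ℝ :=
  dbarM w X •
    ∑ i : Fin n, ∑ j : Fin n,
      if i < j ∧ 0 < rowDist X i j then (w i j / rowDist X i j) • Amat i j else 0

/-- The variance of the distances `η₂²(X)` as a function of the configuration matrix. -/
noncomputable def eta2sqM {n p : ℕ} (w : Fin n → Fin n → ℝ)
    (X : Matrix (Fin n) (Fin p) ℝ) : ℝ :=
  ∑ i : Fin n, ∑ j : Fin n,
    if i < j then w i j * (rowDist X i j - dbarM w X) ^ 2 else 0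

attribute [local instance] Matrix.frobeniusNormedAddCommGroup Matrix.frobeniusNormedSpace

/-! Since the weights sum to one, the derivative of a weighted variance `∑ c (f - f̄)²`
is `2 ∑ c (f - f̄) f'`: the terms involving `f̄'` cancel because `∑ c (f - f̄) = 0`. Each
distance `d_ij` is the norm of the linear image `X ↦ row_i X - row_j X`, so where it does not
vanish its derivative is `H ↦ tr(Hᵀ A_ij X) / d_ij`, and a pair with `d_ij = 0` carries zero
weight. Collecting coefficients, `c (d - d̄) / d = c - d̄ c / d` produces the matrix
`V - M(X)`. -/

open scoped RealInnerProductSpace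

section WeightedVariance

variable {ι E : Type*} [Fintype ι] [NormedAddCommGroup E] [NormedSpace ℝ E]

def weightedVariance (c f : ι → ℝ) : ℝ :=
  ∑ i, c i * (f i - ∑ j, c j * f j) ^ 2

theorem weightedVariance_eq_sub_sq {c : ι → ℝ} (hc : ∑ i, c i = 1) (f : ι → ℝ) :
    weightedVariance c f = ∑ i, c i * f i ^ 2 - (∑ i, c i * f i) ^ 2 := by
  set m := ∑ j, c j * f j
  calc ∑ i, c i * (f i - m) ^ 2
      = ∑ i, c i * f i ^ 2 - 2 * m * ∑ i, c i * f i + m ^ 2 * ∑ i, c i := by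
        simp only [Finset.mul_sum, ← Finset.sum_sub_distrib, ← Finset.sum_add_distrib]
        exact Finset.sum_congr rfl fun i _ => by ring
    _ = ∑ i, c i * f i ^ 2 - m ^ 2 := by rw [hc]; ring

theorem HasFDerivAt.const_mul_of_ne_zero {g : E → ℝ} {g' : E →L[ℝ] ℝ} {x : E} {a : ℝ}
    (hg : a ≠ 0 → HasFDerivAt g g' x) : HasFDerivAt (fun y => a * g y) (a • g') x := by
  rcases eq_or_ne a 0 with rfl | ha
  · simpa using hasFDerivAt_const (0 : ℝ) x
  · exact (hg ha).const_mul a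

theorem hasFDerivAt_weightedVariance {c : ι → ℝ} (hc : ∑ i, c i = 1) {f : ι → E → ℝ}
    {f' : ι → E →L[ℝ] ℝ} {x : E} (hf : ∀ i, c i ≠ 0 → HasFDerivAt (f i) (f' i) x) :
    HasFDerivAt (fun y => weightedVariance c (f · y))
      (2 • ∑ i, (c i * (f i x - ∑ j, c j * f j x)) • f' i) x := by
  have hmean : HasFDerivAt (fun y => ∑ j, c j * f j y) (∑ j, c j • f' j) x :=
    HasFDerivAt.fun_sum fun j _ => HasFDerivAt.const_mul_of_ne_zero (hf j)
  have hsq : HasFDerivAt (fun y => ∑ i, c i * f i y ^ 2)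
      (∑ i, c i • ((2 * f i x) • f' i)) x :=
    HasFDerivAt.fun_sum fun i _ => HasFDerivAt.const_mul_of_ne_zero fun hi => by
      simpa using (hf i hi).pow 2
  simp only [weightedVariance_eq_sub_sq hc]
  refine (hsq.sub (hmean.pow 2)).congr_fderiv ?_
  ext v
  simp only [_root_.smul_apply, _root_.sub_apply, _root_.sum_apply, smul_eq_mul, nsmul_eq_mul,
    Finset.mul_sum, ← Finset.sum_sub_distrib]
  exact Finset.sum_congr rfl fun i _ => by push_cast; ring

end WeightedVariance

section NormDeriv

variable {E F : Type*} [NormedAddCommGroup E] [NormedSpace ℝ E]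
  [NormedAddCommGroup F] [InnerProductSpace ℝ F]

theorem HasFDerivAt.norm {f : E → F} {f' : E →L[ℝ] F} {x : E} (hf : HasFDerivAt f f' x)
    (hx : f x ≠ 0) :
    HasFDerivAt (fun y => ‖f y‖) (‖f x‖⁻¹ • (innerSL ℝ (f x)).comp f') x := by
  have hnorm : ‖f x‖ ≠ 0 := norm_ne_zero_iff.mpr hx
  have := hf.norm_sq.sqrt (pow_ne_zero 2 hnorm)
  simp only [Real.sqrt_sq (norm_nonneg _)] at this
  refine this.congr_fderiv ?_
  ext v
  simp only [_root_.smul_apply, ContinuousLinearMap.comp_apply, innerSL_apply_apply, smul_eq_mul,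
    nsmul_eq_mul, Nat.cast_ofNat]
  field_simp

end NormDeriv

theorem Matrix.trace_mul_sum_smul_mul {ι l m o R : Type*} [Fintype ι] [Fintype l] [Fintype m]
    [Fintype o] [CommSemiring R] (B : Matrix o l R) (A : ι → Matrix l m R) (C : Matrix m o R)
    (a : ι → R) :
    trace (B * (∑ x, a x • A x) * C) = ∑ x, a x * trace (B * A x * C) := by
  simp [Matrix.mul_sum, Matrix.sum_mul, Matrix.trace_sum, Matrix.trace_smul]

section RowDifference

variable {n p : ℕ}

noncomputable def rowDiff (i j : Fin n) :
    Matrix (Fin n) (Fin p) ℝ →L[ℝ] EuclideanSpace ℝ (Fin p) :=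
  LinearMap.toContinuousLinearMap
    { toFun := fun Y => WithLp.toLp 2 (fun k => Y i k - Y j k)
      map_add' := fun Y Z => by ext k; simp only [Matrix.add_apply, PiLp.add_apply]; ring
      map_smul' := fun a Y => by ext k; simp [mul_sub] }

@[simp]
theorem rowDiff_apply (i j : Fin n) (Y : Matrix (Fin n) (Fin p) ℝ) (k : Fin p) :
    rowDiff i j Y k = Y i k - Y j k := rfl

theorem rowDist_eq_norm_rowDiff (Y : Matrix (Fin n) (Fin p) ℝ) (i j : Fin n) :
    rowDist Y i j = ‖rowDiff i j Y‖ := by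
  rw [rowDist, EuclideanSpace.norm_eq]
  simp

theorem inner_rowDiff (X H : Matrix (Fin n) (Fin p) ℝ) (i j : Fin n) :
    ⟪rowDiff i j X, rowDiff i j H⟫ = trace (Hᵀ * Amat i j * X) := by
  simp only [PiLp.inner_apply, rowDiff_apply, RCLike.inner_apply', conj_trivial, Matrix.trace,
    Matrix.diag_apply, Matrix.mul_apply, Amat, Matrix.vecMulVec_apply, Matrix.transpose_apply,
    Pi.sub_apply, Pi.single_apply]
  refine Finset.sum_congr rfl fun k _ => ?_
  simp only [mul_sub, mul_ite, mul_one, mul_zero, sub_mul, ite_mul, zero_mul,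
    Finset.sum_sub_distrib, Finset.sum_ite_irrel, Finset.sum_ite_eq', Finset.mem_univ, if_true,
    Finset.sum_const_zero]
  ring

noncomputable def rowDistDeriv (X : Matrix (Fin n) (Fin p) ℝ) (i j : Fin n) :
    Matrix (Fin n) (Fin p) ℝ →L[ℝ] ℝ :=
  (rowDist X i j)⁻¹ • (innerSL ℝ (rowDiff i j X)).comp (rowDiff i j)

theorem rowDistDeriv_apply (X H : Matrix (Fin n) (Fin p) ℝ) (i j : Fin n) :
    rowDistDeriv X i j H = (rowDist X i j)⁻¹ * trace (Hᵀ * Amat i j * X) := by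
  rw [← inner_rowDiff]
  rfl

theorem hasFDerivAt_rowDist {X : Matrix (Fin n) (Fin p) ℝ} {i j : Fin n}
    (hX : rowDist X i j ≠ 0) :
    HasFDerivAt (fun Y => rowDist Y i j) (rowDistDeriv X i j) X := by
  simp only [rowDistDeriv, rowDist_eq_norm_rowDiff] at hX ⊢
  exact (rowDiff i j).hasFDerivAt.norm (norm_ne_zero_iff.mp hX)

end RowDifference

section PairSums

variable {n p : ℕ}

def pairWeight (w : Fin n → Fin n → ℝ) (x : Fin n × Fin n) : ℝ :=
  if x.1 < x.2 then w x.1 x.2 else 0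

theorem sum_ite_lt_smul {M : Type*} [AddCommMonoid M] [Module ℝ M] (w : Fin n → Fin n → ℝ)
    (g : Fin n → Fin n → M) :
    (∑ i, ∑ j, if i < j then w i j • g i j else 0) = ∑ x, pairWeight w x • g x.1 x.2 := by
  rw [Fintype.sum_prod_type]
  simp only [pairWeight, ite_smul, zero_smul]

theorem sum_pairWeight (w : Fin n → Fin n → ℝ) :
    ∑ x, pairWeight w x = ∑ i, ∑ j, if i < j then w i j else 0 := by
  simpa using (sum_ite_lt_smul w fun _ _ => (1 : ℝ)).symm

theorem rowDist_ne_zero_of_pairWeight_ne_zero {w : Fin n → Fin n → ℝ}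
    (hw : ∀ i j : Fin n, i < j → 0 ≤ w i j) {X : Matrix (Fin n) (Fin p) ℝ}
    (hd : ∀ i j : Fin n, i < j → 0 < w i j → 0 < rowDist X i j) {x : Fin n × Fin n}
    (hx : pairWeight w x ≠ 0) : rowDist X x.1 x.2 ≠ 0 := by
  obtain ⟨i, j⟩ := x
  by_cases hij : i < j
  · simp only [pairWeight, if_pos hij] at hx
    exact (hd i j hij ((hw i j hij).lt_of_ne' hx)).ne'
  · simp [pairWeight, hij] at hx

theorem dbarM_eq_sum_pairWeight (w : Fin n → Fin n → ℝ) (Y : Matrix (Fin n) (Fin p) ℝ) :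
    dbarM w Y = ∑ x, pairWeight w x * rowDist Y x.1 x.2 :=
  sum_ite_lt_smul w fun i j => rowDist Y i j

theorem eta2sqM_eq_weightedVariance (w : Fin n → Fin n → ℝ) (Y : Matrix (Fin n) (Fin p) ℝ) :
    eta2sqM w Y = weightedVariance (pairWeight w) fun x => rowDist Y x.1 x.2 := by
  rw [weightedVariance, ← dbarM_eq_sum_pairWeight]
  exact sum_ite_lt_smul w fun i j => (rowDist Y i j - dbarM w Y) ^ 2

theorem Vmat_eq_sum_pairWeight (w : Fin n → Fin n → ℝ) :
    Vmat w = ∑ x, pairWeight w x • Amat x.1 x.2 :=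
  sum_ite_lt_smul w Amat

-- The guard `0 < d_ij` in `Mmat` can be dropped, since `w_ij / 0 = 0`.
theorem Mmat_eq_sum_pairWeight (w : Fin n → Fin n → ℝ) (X : Matrix (Fin n) (Fin p) ℝ) :
    Mmat w X = dbarM w X • ∑ x, (pairWeight w x / rowDist X x.1 x.2) • Amat x.1 x.2 := by
  rw [Mmat, Fintype.sum_prod_type]
  congr 1
  refine Finset.sum_congr rfl fun i _ => Finset.sum_congr rfl fun j _ => ?_
  rcases (show 0 ≤ rowDist X i j from Real.sqrt_nonneg _).lt_or_eq with hpos | hzero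
  · simp [pairWeight, hpos, ite_div]
  · simp [pairWeight, ← hzero]

theorem Vmat_sub_Mmat_eq_sum (w : Fin n → Fin n → ℝ) (X : Matrix (Fin n) (Fin p) ℝ) :
    Vmat w - Mmat w X = ∑ x,
      (pairWeight w x - dbarM w X * (pairWeight w x / rowDist X x.1 x.2)) • Amat x.1 x.2 := by
  simp only [Vmat_eq_sum_pairWeight, Mmat_eq_sum_pairWeight, Finset.smul_sum, smul_smul,
    ← Finset.sum_sub_distrib, sub_smul]

end PairSums

theorem hasFDerivAt_eta2sq_general
    {n p : ℕ}
    (w : Fin n → Fin n → ℝ)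
    (hw : ∀ i j : Fin n, i < j → 0 ≤ w i j)
    (hw1 : (∑ i : Fin n, ∑ j : Fin n, if i < j then w i j else 0) = 1)
    (X : Matrix (Fin n) (Fin p) ℝ)
    (hd : ∀ i j : Fin n, i < j → 0 < w i j → 0 < rowDist X i j) :
    ∃ L : Matrix (Fin n) (Fin p) ℝ →L[ℝ] ℝ,
      (∀ H : Matrix (Fin n) (Fin p) ℝ,
        L H = 2 * Matrix.trace (Hᵀ * (Vmat w - Mmat w X) * X)) ∧
      HasFDerivAt (eta2sqM w) L X := by
  have hc : ∑ x, pairWeight w x = 1 := (sum_pairWeight w).trans hw1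
  have hpos : ∀ x, pairWeight w x ≠ 0 → rowDist X x.1 x.2 ≠ 0 := fun _ =>
    rowDist_ne_zero_of_pairWeight_ne_zero hw hd
  refine ⟨2 • ∑ x, (pairWeight w x * (rowDist X x.1 x.2 - dbarM w X)) •
    rowDistDeriv X x.1 x.2, fun H => ?_, ?_⟩
  · rw [Vmat_sub_Mmat_eq_sum, Matrix.trace_mul_sum_smul_mul]
    simp only [_root_.smul_apply, _root_.sum_apply, rowDistDeriv_apply, smul_eq_mul,
      nsmul_eq_mul, Nat.cast_ofNat, Finset.mul_sum]
    refine Finset.sum_congr rfl fun x _ => ?_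
    rcases eq_or_ne (pairWeight w x) 0 with hx | hx
    · simp [hx]
    · field_simp [hpos x hx]
  · rw [funext (eta2sqM_eq_weightedVariance w), dbarM_eq_sum_pairWeight]
    exact hasFDerivAt_weightedVariance hc fun x hx => hasFDerivAt_rowDist (hpos x hx)

/-- Gradient of the variance of the distances: `η₂²` is Fréchet differentiable at `X`
with derivative `H ↦ 2·trace(Hᵀ (V − M(X)) X)`. -/
theorem hasFDerivAt_eta2sq
    {n p : ℕ} (hn : 2 ≤ n) (hp : 1 ≤ p)
    (w : Fin n → Fin n → ℝ)
    (hw : ∀ i j : Fin n, i < j → 0 ≤ w i j)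
    (hw1 : (∑ i : Fin n, ∑ j : Fin n, if i < j then w i j else 0) = 1)
    (X : Matrix (Fin n) (Fin p) ℝ)
    (hd : ∀ i j : Fin n, i < j → 0 < w i j → 0 < rowDist X i j) :
    ∃ L : Matrix (Fin n) (Fin p) ℝ →L[ℝ] ℝ,
      (∀ H : Matrix (Fin n) (Fin p) ℝ,
        L H = 2 * Matrix.trace (Hᵀ * (Vmat w - Mmat w X) * X)) ∧
      HasFDerivAt (eta2sqM w) L X :=
  hasFDerivAt_eta2sq_general w hw hw1 X hd
end

section
/- (Stationary points are exactly the fixed points of the majorization update.) Let X be an n×p real matrix with η₂²(X) > 0 and d_ij(X) > 0 for every pair i < j with w_ij > 0. Then the Fréchet derivative of σ₂ at X is zero if and only if ((1 − σ₂(X))·V + σ₂(X)·M(X))·X = B(X)·X. -/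
open scoped BigOperators
open Matrix

/-- The matrix `B(X) = Σ_{i<j, d_ij(X)>0} w_ij (δ_ij/d_ij(X)) A_ij`. -/
noncomputable def Bmat {n p : ℕ} (w δ : Fin n → Fin n → ℝ)
    (X : Matrix (Fin n) (Fin p) ℝ) : Matrix (Fin n) (Fin n) ℝ :=
  ∑ i : Fin n, ∑ j : Fin n,
    if i < j ∧ 0 < rowDist X i j then (w i j * (δ i j / rowDist X i j)) • Amat i j else 0

/-- Raw stress as a function of the configuration matrix. -/
noncomputable def sigmaRM {n p : ℕ} (w δ : Fin n → Fin n → ℝ)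
    (X : Matrix (Fin n) (Fin p) ℝ) : ℝ :=
  ∑ i : Fin n, ∑ j : Fin n, if i < j then w i j * (δ i j - rowDist X i j) ^ 2 else 0

/-- Kruskal's stress formula two as a function of the configuration matrix. -/
noncomputable def sigma2M {n p : ℕ} (w δ : Fin n → Fin n → ℝ)
    (X : Matrix (Fin n) (Fin p) ℝ) : ℝ :=
  sigmaRM w δ X / eta2sqM w X

attribute [local instance] Matrix.frobeniusNormedAddCommGroup Matrix.frobeniusNormedSpace

/-!
Pair every matrix `G` with the functional `H ↦ Σ G_rk H_rk`, so that derivatives on configuration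
space become gradient matrices. Where `d_ij > 0` the distance has gradient `A_ij X / d_ij`, hence
`∇σ_R = 2 (V - B) X`; writing `η₂² = Σ w d² - d̄²` (this is where `Σ w = 1` enters) gives
`∇η₂² = 2 (V - M) X`. The quotient rule then yields
`∇σ₂ = (2 / η₂²) (((1 - σ₂) V + σ₂ M - B) X)`, which vanishes exactly at the fixed points.
-/

section FrobeniusDual
variable {m n : ℕ}

/- The codomain carries the product topology of `Matrix`, while `HasFDerivAt` on the Frobenius
normed space builds its derivatives over the Frobenius topology. The two agree only after unfolding,
so derivatives are combined below by `exact`/`congr_fderiv` against explicitly stated formulas. -/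
noncomputable def frobeniusDual :
    Matrix (Fin m) (Fin n) ℝ →ₗ[ℝ] Matrix (Fin m) (Fin n) ℝ →L[ℝ] ℝ :=
  LinearMap.toContinuousLinearMap.toLinearMap ∘ₗ
    LinearMap.mk₂ ℝ (fun G H => ∑ r, ∑ k, G r k * H r k)
      (fun _ _ _ => by simp only [Matrix.add_apply, add_mul, Finset.sum_add_distrib])
      (fun _ _ _ => by simp only [Matrix.smul_apply, smul_eq_mul, Finset.mul_sum, mul_assoc])
      (fun _ _ _ => by simp only [Matrix.add_apply, mul_add, Finset.sum_add_distrib])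
      (fun _ _ _ => by simp only [Matrix.smul_apply, smul_eq_mul, Finset.mul_sum, mul_left_comm])

lemma frobeniusDual_apply (G H : Matrix (Fin m) (Fin n) ℝ) :
    frobeniusDual G H = ∑ r, ∑ k, G r k * H r k := rfl

lemma frobeniusDual_comm (G H : Matrix (Fin m) (Fin n) ℝ) :
    frobeniusDual G H = frobeniusDual H G := by
  simp only [frobeniusDual_apply, mul_comm]

lemma frobeniusDual_single (r : Fin m) (k : Fin n) (H : Matrix (Fin m) (Fin n) ℝ) :
    frobeniusDual (Matrix.single r k 1) H = H r k := by
  simp [frobeniusDual_apply, Matrix.single_apply, ite_and]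

lemma frobeniusDual_injective :
    Function.Injective (frobeniusDual : Matrix (Fin m) (Fin n) ℝ → _) := by
  rw [← LinearMap.ker_eq_bot, LinearMap.ker_eq_bot']
  intro G hG
  ext r k
  simpa [frobeniusDual_comm G, frobeniusDual_single] using
    congrArg (fun L => L (Matrix.single r k 1)) hG

end FrobeniusDual

theorem HasFDerivAt.div {𝕜 E : Type*} [NontriviallyNormedField 𝕜] [NormedAddCommGroup E]
    [NormedSpace 𝕜 E] {f g : E → 𝕜} {f' g' : E →L[𝕜] 𝕜} {x : E}
    (hf : HasFDerivAt f f' x) (hg : HasFDerivAt g g' x) (hx : g x ≠ 0) :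
    HasFDerivAt (fun y => f y / g y) ((g x)⁻¹ • (f' - (f x / g x) • g')) x := by
  simp only [div_eq_mul_inv]
  refine (hf.fun_mul ((hasDerivAt_inv hx).comp_hasFDerivAt x hg)).congr_fderiv ?_
  rw [Function.comp_apply, smul_sub, smul_smul, smul_smul]
  match_scalars <;> field_simp

section RowDist
variable {n p : ℕ}

lemma rowDist_nonneg (X : Matrix (Fin n) (Fin p) ℝ) (i j : Fin n) : 0 ≤ rowDist X i j :=
  Real.sqrt_nonneg _

lemma rowDist_sq (X : Matrix (Fin n) (Fin p) ℝ) (i j : Fin n) :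
    rowDist X i j ^ 2 = ∑ k, (X i k - X j k) ^ 2 :=
  Real.sq_sqrt (Finset.sum_nonneg fun _ _ => sq_nonneg _)

lemma Amat_mul_apply (i j : Fin n) (X : Matrix (Fin n) (Fin p) ℝ) (r : Fin n) (k : Fin p) :
    (Amat i j * X) r k = (Pi.single i 1 - Pi.single j 1 : Fin n → ℝ) r * (X i k - X j k) := by
  simp [Amat, Matrix.mul_apply, Matrix.vecMulVec_apply, sub_mul, mul_sub, Finset.sum_sub_distrib,
    Pi.single_apply]

lemma frobeniusDual_Amat_mul (i j : Fin n) (X H : Matrix (Fin n) (Fin p) ℝ) :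
    frobeniusDual (Amat i j * X) H = ∑ k, (X i k - X j k) * (H i k - H j k) := by
  simp only [frobeniusDual_apply, Amat_mul_apply]
  rw [Finset.sum_comm]
  refine Finset.sum_congr rfl fun k _ => ?_
  simp [mul_sub, Finset.sum_sub_distrib, Pi.single_apply, mul_comm]

lemma hasFDerivAt_rowDist_sq (i j : Fin n) (X : Matrix (Fin n) (Fin p) ℝ) :
    HasFDerivAt (fun Y => rowDist Y i j ^ 2) (frobeniusDual ((2 : ℝ) • (Amat i j * X))) X := by
  have hcoord (k : Fin p) : HasFDerivAt (fun Y : Matrix (Fin n) (Fin p) ℝ => Y i k - Y j k)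
      (frobeniusDual (Matrix.single i k 1 - Matrix.single j k 1)) X := by
    convert (frobeniusDual (Matrix.single i k (1 : ℝ) - Matrix.single j k 1)).hasFDerivAt using 1
    ext Y
    simp [frobeniusDual_single]
  have hsum : HasFDerivAt (fun Y => ∑ k, (Y i k - Y j k) ^ 2)
      (∑ k, (2 • (X i k - X j k) ^ (2 - 1)) •
        frobeniusDual (Matrix.single i k 1 - Matrix.single j k 1)) X :=
    HasFDerivAt.fun_sum fun k _ => (hcoord k).pow 2
  simp_rw [rowDist_sq]
  refine hsum.congr_fderiv ?_
  ext H
  simp [frobeniusDual_Amat_mul, frobeniusDual_single, Finset.mul_sum, mul_assoc]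

lemma hasFDerivAt_comp_rowDist {φ : ℝ → ℝ} {φ' : ℝ} {X : Matrix (Fin n) (Fin p) ℝ} {i j : Fin n}
    (hd : 0 < rowDist X i j) (hφ : HasDerivAt φ φ' (rowDist X i j)) :
    HasFDerivAt (fun Y => φ (rowDist Y i j))
      (frobeniusDual ((φ' / rowDist X i j) • (Amat i j * X))) X := by
  have hsqrt : HasDerivAt (fun s => φ (√s)) (φ' * (1 / (2 * √(rowDist X i j ^ 2))))
      (rowDist X i j ^ 2) := by
    refine HasDerivAt.comp _ ?_ (Real.hasDerivAt_sqrt (by positivity))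
    rwa [Real.sqrt_sq (rowDist_nonneg X i j)]
  have hcomp : HasFDerivAt ((fun s => φ (√s)) ∘ fun Y => rowDist Y i j ^ 2)
      ((φ' * (1 / (2 * √(rowDist X i j ^ 2)))) • frobeniusDual ((2 : ℝ) • (Amat i j * X))) X :=
    hsqrt.comp_hasFDerivAt X (hasFDerivAt_rowDist_sq i j X)
  simp only [Function.comp_def, Real.sqrt_sq (rowDist_nonneg _ i j)] at hcomp
  refine hcomp.congr_fderiv ?_
  rw [← map_smul, smul_smul]
  congr 2
  field_simp

end RowDist

section PairMat
variable {n p : ℕ}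

noncomputable def pairMat : (Fin n → Fin n → ℝ) →ₗ[ℝ] Matrix (Fin n) (Fin n) ℝ where
  toFun c := ∑ i, ∑ j, if i < j then c i j • Amat i j else 0
  map_add' c c' := by
    simp only [← Finset.sum_add_distrib]
    refine Finset.sum_congr rfl fun i _ => Finset.sum_congr rfl fun j _ => ?_
    split_ifs <;> simp [add_smul]
  map_smul' a c := by
    simp only [Finset.smul_sum]
    refine Finset.sum_congr rfl fun i _ => Finset.sum_congr rfl fun j _ => ?_
    split_ifs <;> simp [mul_smul]

lemma pairMat_apply (c : Fin n → Fin n → ℝ) :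
    pairMat c = ∑ i, ∑ j, if i < j then c i j • Amat i j else 0 := rfl

lemma pairMat_congr {c c' : Fin n → Fin n → ℝ} (h : ∀ i j, i < j → c i j = c' i j) :
    pairMat c = pairMat c' := by
  simp only [pairMat_apply]
  refine Finset.sum_congr rfl fun i _ => Finset.sum_congr rfl fun j _ => ?_
  split_ifs with hij
  · rw [h i j hij]
  · rfl

lemma Vmat_eq_pairMat (w : Fin n → Fin n → ℝ) : Vmat w = pairMat w := rfl

/- The guard `0 < d_ij` in `Bmat` and `Mmat` is redundant: at `d_ij = 0` the coefficient is a
quotient by zero, which is `0`. -/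
lemma Bmat_eq_pairMat (w δ : Fin n → Fin n → ℝ) (X : Matrix (Fin n) (Fin p) ℝ) :
    Bmat w δ X = pairMat fun i j => w i j * (δ i j / rowDist X i j) := by
  simp only [Bmat, pairMat_apply]
  refine Finset.sum_congr rfl fun i _ => Finset.sum_congr rfl fun j _ => ?_
  rcases (rowDist_nonneg X i j).lt_or_eq with hd | hd
  · simp [hd]
  · simp [← hd]

lemma Mmat_eq_pairMat (w : Fin n → Fin n → ℝ) (X : Matrix (Fin n) (Fin p) ℝ) :
    Mmat w X = dbarM w X • pairMat fun i j => w i j / rowDist X i j := by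
  simp only [Mmat, pairMat_apply]
  congr 1
  refine Finset.sum_congr rfl fun i _ => Finset.sum_congr rfl fun j _ => ?_
  rcases (rowDist_nonneg X i j).lt_or_eq with hd | hd
  · simp [hd]
  · simp [← hd]

lemma frobeniusDual_pairMat_mul (c : Fin n → Fin n → ℝ) (X : Matrix (Fin n) (Fin p) ℝ) :
    frobeniusDual (pairMat c * X)
      = ∑ i, ∑ j, if i < j then frobeniusDual (c i j • (Amat i j * X)) else 0 := by
  simp only [pairMat_apply, Matrix.sum_mul, map_sum]
  refine Finset.sum_congr rfl fun i _ => Finset.sum_congr rfl fun j _ => ?_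
  split_ifs <;> simp

lemma hasFDerivAt_sum_pairs_comp_rowDist {w : Fin n → Fin n → ℝ} {φ : Fin n → Fin n → ℝ → ℝ}
    {φ' : Fin n → Fin n → ℝ} {X : Matrix (Fin n) (Fin p) ℝ}
    (hφ : ∀ i j, i < j → HasDerivAt (φ i j) (φ' i j) (rowDist X i j))
    (hd : ∀ i j, i < j → w i j ≠ 0 → 0 < rowDist X i j) :
    HasFDerivAt (fun Y => ∑ i, ∑ j, if i < j then w i j * φ i j (rowDist Y i j) else 0)
      (frobeniusDual (pairMat (fun i j => w i j * φ' i j / rowDist X i j) * X)) X := by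
  rw [frobeniusDual_pairMat_mul]
  refine HasFDerivAt.fun_sum fun i _ => HasFDerivAt.fun_sum fun j _ => ?_
  by_cases hij : i < j
  · simp only [if_pos hij]
    by_cases hw : w i j = 0
    · simp only [hw, zero_mul, zero_div, zero_smul, map_zero]
      exact hasFDerivAt_const 0 X
    · exact hasFDerivAt_comp_rowDist (hd i j hij hw) ((hφ i j hij).const_mul (w i j))
  · simp only [if_neg hij]
    exact hasFDerivAt_const 0 X

end PairMat

section Stress
variable {n p : ℕ} {w δ : Fin n → Fin n → ℝ} {X : Matrix (Fin n) (Fin p) ℝ}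

lemma hasFDerivAt_sigmaRM (hd : ∀ i j, i < j → w i j ≠ 0 → 0 < rowDist X i j) :
    HasFDerivAt (sigmaRM w δ) (frobeniusDual ((2 : ℝ) • ((Vmat w - Bmat w δ X) * X))) X := by
  have hφ (i j : Fin n) (_ : i < j) : HasDerivAt (fun t => (δ i j - t) ^ 2)
      (-(2 * (δ i j - rowDist X i j))) (rowDist X i j) := by
    simpa using ((hasDerivAt_id _).const_sub (δ i j)).fun_pow 2
  refine (hasFDerivAt_sum_pairs_comp_rowDist hφ hd).congr_fderiv ?_
  rw [Vmat_eq_pairMat, Bmat_eq_pairMat, ← map_sub, ← Matrix.smul_mul, ← map_smul]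
  congr 2
  refine pairMat_congr fun i j hij => ?_
  by_cases hw : w i j = 0
  · simp [hw]
  · have := (hd i j hij hw).ne'
    simp only [Pi.smul_apply, Pi.sub_apply, smul_eq_mul]
    field_simp
    ring

lemma hasFDerivAt_dbarM (hd : ∀ i j, i < j → w i j ≠ 0 → 0 < rowDist X i j) :
    HasFDerivAt (dbarM w) (frobeniusDual (pairMat (fun i j => w i j / rowDist X i j) * X)) X := by
  refine (hasFDerivAt_sum_pairs_comp_rowDist (φ := fun _ _ t => t) (φ' := fun _ _ => 1)
    (fun _ _ _ => hasDerivAt_id _) hd).congr_fderiv ?_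
  simp only [mul_one]

lemma eta2sqM_eq_sub_sq (hw1 : (∑ i : Fin n, ∑ j : Fin n, if i < j then w i j else 0) = 1)
    (Y : Matrix (Fin n) (Fin p) ℝ) :
    eta2sqM w Y = (∑ i, ∑ j, if i < j then w i j * rowDist Y i j ^ 2 else 0) - dbarM w Y ^ 2 := by
  have hterm (i j : Fin n) : (if i < j then w i j * (rowDist Y i j - dbarM w Y) ^ 2 else 0)
      = (if i < j then w i j * rowDist Y i j ^ 2 else 0)
        - 2 * dbarM w Y * (if i < j then w i j * rowDist Y i j else 0)
        + dbarM w Y ^ 2 * (if i < j then w i j else 0) := by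
    split_ifs <;> ring
  rw [eta2sqM]
  simp only [hterm, Finset.sum_add_distrib, Finset.sum_sub_distrib, ← Finset.mul_sum, hw1]
  rw [← dbarM]
  ring

lemma hasFDerivAt_eta2sqM (hw1 : (∑ i : Fin n, ∑ j : Fin n, if i < j then w i j else 0) = 1)
    (hd : ∀ i j, i < j → w i j ≠ 0 → 0 < rowDist X i j) :
    HasFDerivAt (eta2sqM w) (frobeniusDual ((2 : ℝ) • ((Vmat w - Mmat w X) * X))) X := by
  have hφ (i j : Fin n) (_ : i < j) :
      HasDerivAt (fun t => t ^ 2) (2 * rowDist X i j) (rowDist X i j) := by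
    simpa using hasDerivAt_pow 2 (rowDist X i j)
  set N := pairMat fun i j => w i j / rowDist X i j
  have hgrad :
      frobeniusDual (pairMat (fun i j => w i j * (2 * rowDist X i j) / rowDist X i j) * X)
        - (2 • dbarM w X ^ (2 - 1)) • frobeniusDual (N * X)
      = frobeniusDual ((2 : ℝ) • ((Vmat w - Mmat w X) * X)) := by
    have hV : pairMat (fun i j => w i j * (2 * rowDist X i j) / rowDist X i j)
        = (2 : ℝ) • pairMat w := by
      rw [← map_smul]
      refine pairMat_congr fun i j hij => ?_
      by_cases hw : w i j = 0
      · simp [hw]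
      · field_simp [(hd i j hij hw).ne']
        simp [mul_comm]
    rw [← map_smul, ← map_sub, Mmat_eq_pairMat, Vmat_eq_pairMat, hV]
    congr 1
    simp only [Nat.reduceSub, pow_one, nsmul_eq_mul, Nat.cast_ofNat, Matrix.sub_mul,
      Matrix.smul_mul]
    module
  rw [show eta2sqM w = _ from funext (eta2sqM_eq_sub_sq hw1)]
  exact ((hasFDerivAt_sum_pairs_comp_rowDist hφ hd).sub
    ((hasFDerivAt_dbarM hd).pow 2)).congr_fderiv hgrad

lemma hasFDerivAt_sigma2M (hw1 : (∑ i : Fin n, ∑ j : Fin n, if i < j then w i j else 0) = 1)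
    (hd : ∀ i j, i < j → w i j ≠ 0 → 0 < rowDist X i j) (hη : eta2sqM w X ≠ 0) :
    HasFDerivAt (sigma2M w δ) (frobeniusDual ((2 / eta2sqM w X) •
      (((1 - sigma2M w δ X) • Vmat w + sigma2M w δ X • Mmat w X - Bmat w δ X) * X))) X := by
  have hgrad : (eta2sqM w X)⁻¹ • (frobeniusDual ((2 : ℝ) • ((Vmat w - Bmat w δ X) * X))
      - sigma2M w δ X • frobeniusDual ((2 : ℝ) • ((Vmat w - Mmat w X) * X)))
      = frobeniusDual ((2 / eta2sqM w X) •
        (((1 - sigma2M w δ X) • Vmat w + sigma2M w δ X • Mmat w X - Bmat w δ X) * X)) := by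
    rw [← map_smul, ← map_sub, ← map_smul]
    congr 1
    simp only [Matrix.sub_mul, Matrix.add_mul, Matrix.smul_mul]
    match_scalars <;> ring
  exact ((hasFDerivAt_sigmaRM hd).div (hasFDerivAt_eta2sqM hw1 hd) hη).congr_fderiv hgrad

end Stress

theorem stationary_iff_fixed_point_general
    {n p : ℕ}
    (w δ : Fin n → Fin n → ℝ)
    (hw : ∀ i j : Fin n, i < j → 0 ≤ w i j)
    (hw1 : (∑ i : Fin n, ∑ j : Fin n, if i < j then w i j else 0) = 1)
    (X : Matrix (Fin n) (Fin p) ℝ)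
    (heta : 0 < eta2sqM w X)
    (hd : ∀ i j : Fin n, i < j → 0 < w i j → 0 < rowDist X i j) :
    HasFDerivAt (sigma2M w δ) (0 : Matrix (Fin n) (Fin p) ℝ →L[ℝ] ℝ) X ↔
      ((1 - sigma2M w δ X) • Vmat w + sigma2M w δ X • Mmat w X) * X = Bmat w δ X * X := by
  have hS := hasFDerivAt_sigma2M (δ := δ) hw1
    (fun i j hij hw0 => hd i j hij ((hw i j hij).lt_of_ne' hw0)) heta.ne'
  rw [← sub_eq_zero, ← Matrix.sub_mul, ← smul_eq_zero_iff_right (div_ne_zero two_ne_zero heta.ne'),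
    ← frobeniusDual_injective.eq_iff, map_zero]
  exact ⟨fun h => hS.unique h, fun h => h ▸ hS⟩

/-- Stationary points of `σ₂` are exactly the fixed points of the majorization update:
the Fréchet derivative of `σ₂` at `X` is zero iff
`((1 − σ₂(X))V + σ₂(X)M(X))X = B(X)X`. -/
theorem stationary_iff_fixed_point
    {n p : ℕ} (hn : 2 ≤ n) (hp : 1 ≤ p)
    (w δ : Fin n → Fin n → ℝ)
    (hw : ∀ i j : Fin n, i < j → 0 ≤ w i j)
    (hw1 : (∑ i : Fin n, ∑ j : Fin n, if i < j then w i j else 0) = 1)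
    (hδ : ∀ i j : Fin n, i < j → 0 ≤ δ i j)
    (X : Matrix (Fin n) (Fin p) ℝ)
    (heta : 0 < eta2sqM w X)
    (hd : ∀ i j : Fin n, i < j → 0 < w i j → 0 < rowDist X i j) :
    HasFDerivAt (sigma2M w δ) (0 : Matrix (Fin n) (Fin p) ℝ →L[ℝ] ℝ) X ↔
      ((1 - sigma2M w δ X) • Vmat w + sigma2M w δ X • Mmat w X) * X = Bmat w δ X * X :=
  stationary_iff_fixed_point_general w δ hw hw1 X heta hd
end
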